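/- Let n ≥ p ≥ 1 and, for X, Y ∈ St(n,p), define the np×np matrix H_D(X,Y) = Sym[YᵀX⊗I_n + (Yᵀ⊗X)Π + I_p⊗YXᵀ] − (3/4)·Sym[(YᵀXXᵀ⊗X)Π + (Xᵀ⊗XYᵀX)Π + I_p⊗XXᵀYXᵀ + YᵀX⊗XXᵀ] + 2·Sym[(XᵀYYᵀ⊗X)Π + I_p⊗XXᵀYYᵀ − (XᵀYYᵀXXᵀ⊗X)Π] + (Xᵀ⊗X)Π + I_p⊗XXᵀ − I_p⊗YYᵀ + XᵀYYᵀX⊗I_n − I_p⊗XXᵀYYᵀXXᵀ − XᵀYYᵀX⊗XXᵀ, where Sym(A) = (A + Aᵀ)/2. Then for all X, Y ∈ St(n,p), ‖H_D(X,Y) − (2I_{np} + (1/2)(Xᵀ⊗X)Π − (1/2)(I_p⊗XXᵀ))‖₂ ≤ 14·‖Y−X‖₂ + 10·‖Y−X‖₂². -/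
import Mathlib


open Matrix
open scoped Kronecker

noncomputable def specNorm {m n : Type*} [Fintype m] [Fintype n] [DecidableEq n]
    (A : Matrix m n ℝ) : ℝ :=
  ‖LinearMap.toContinuousLinearMap (Matrix.toEuclideanLin A)‖

/-- The commutation (vec-permutation) matrix `Π` with rows indexed by `Fin a × Fin b`
and columns by `Fin b × Fin a`; entry `((j,i),(i',j'))` is `1` iff `i = i'` and `j = j'`. -/
def commMat (a b : ℕ) : Matrix (Fin a × Fin b) (Fin b × Fin a) ℝ :=
  fun r c => if r.1 = c.2 ∧ r.2 = c.1 then 1 else 0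

/-- Symmetric part `Sym(A) = (A + Aᵀ)/2`. -/
noncomputable def symPart {m : Type*} (A : Matrix m m ℝ) : Matrix m m ℝ := (1 / 2 : ℝ) • (A + Aᵀ)

/-- The explicit formula `H_D(X,Y)` for the Hessian `∇²_X` of the extended squared-distance
function at `X, Y ∈ St(n,p)`. -/
noncomputable def HD (n p : ℕ) (X Y : Matrix (Fin n) (Fin p) ℝ) :
    Matrix (Fin p × Fin n) (Fin p × Fin n) ℝ :=
  symPart ((Yᵀ * X) ⊗ₖ (1 : Matrix (Fin n) (Fin n) ℝ) + (Yᵀ ⊗ₖ X) * commMat n p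
      + (1 : Matrix (Fin p) (Fin p) ℝ) ⊗ₖ (Y * Xᵀ))
  - (3 / 4 : ℝ) • symPart (((Yᵀ * X * Xᵀ) ⊗ₖ X) * commMat n p
      + (Xᵀ ⊗ₖ (X * Yᵀ * X)) * commMat n p
      + (1 : Matrix (Fin p) (Fin p) ℝ) ⊗ₖ (X * Xᵀ * Y * Xᵀ)
      + (Yᵀ * X) ⊗ₖ (X * Xᵀ))
  + (2 : ℝ) • symPart (((Xᵀ * Y * Yᵀ) ⊗ₖ X) * commMat n p
      + (1 : Matrix (Fin p) (Fin p) ℝ) ⊗ₖ (X * Xᵀ * Y * Yᵀ)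
      - ((Xᵀ * Y * Yᵀ * X * Xᵀ) ⊗ₖ X) * commMat n p)
  + (Xᵀ ⊗ₖ X) * commMat n p
  + (1 : Matrix (Fin p) (Fin p) ℝ) ⊗ₖ (X * Xᵀ)
  - (1 : Matrix (Fin p) (Fin p) ℝ) ⊗ₖ (Y * Yᵀ)
  + (Xᵀ * Y * Yᵀ * X) ⊗ₖ (1 : Matrix (Fin n) (Fin n) ℝ)
  - (1 : Matrix (Fin p) (Fin p) ℝ) ⊗ₖ (X * Xᵀ * Y * Yᵀ * X * Xᵀ)
  - (Xᵀ * Y * Yᵀ * X) ⊗ₖ (X * Xᵀ)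


open scoped Matrix.Norms.L2Operator

set_option linter.unusedSectionVars false

namespace StmtAux

variable {m n l q : Type*} [Fintype m] [Fintype n] [Fintype l] [Fintype q]
  [DecidableEq m] [DecidableEq n] [DecidableEq l] [DecidableEq q]

lemma specNorm_eq (A : Matrix m n ℝ) : specNorm A = ‖A‖ := rfl

lemma norm_transpose (A : Matrix m n ℝ) : ‖Aᵀ‖ = ‖A‖ := by
  rw [← Matrix.conjTranspose_eq_transpose_of_trivial, Matrix.l2_opNorm_conjTranspose]

lemma norm_one_le : ‖(1 : Matrix n n ℝ)‖ ≤ 1 := by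
  rw [Matrix.l2_opNorm_def]
  refine ContinuousLinearMap.opNorm_le_bound _ zero_le_one fun x => ?_
  rw [one_mul]
  simp [LinearEquiv.trans_apply, Matrix.toEuclideanLin_apply, Matrix.one_mulVec]

lemma norm_le_one_of_orth (A : Matrix m n ℝ) (h : Aᵀ * A = 1) : ‖A‖ ≤ 1 := by
  have h2 := Matrix.l2_opNorm_conjTranspose_mul_self A
  rw [Matrix.conjTranspose_eq_transpose_of_trivial, h] at h2
  have h3 : ‖(1 : Matrix n n ℝ)‖ ≤ 1 := norm_one_le
  nlinarith [norm_nonneg A]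

lemma norm_mul_le' (A : Matrix m n ℝ) (B : Matrix n l ℝ) : ‖A * B‖ ≤ ‖A‖ * ‖B‖ :=
  Matrix.l2_opNorm_mul A B

lemma norm_proj_le (X : Matrix m n ℝ) (h : Xᵀ * X = 1) : ‖(1 : Matrix m m ℝ) - X * Xᵀ‖ ≤ 1 := by
  have hPP : (X * Xᵀ) * (X * Xᵀ) = X * Xᵀ := by
    rw [Matrix.mul_assoc, ← Matrix.mul_assoc Xᵀ, h, Matrix.one_mul]
  have hMT : ((1 : Matrix m m ℝ) - X * Xᵀ)ᵀ = (1 : Matrix m m ℝ) - X * Xᵀ := by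
    simp [Matrix.transpose_sub, Matrix.transpose_mul]
  have hMM : ((1 : Matrix m m ℝ) - X * Xᵀ) * ((1 : Matrix m m ℝ) - X * Xᵀ)
      = (1 : Matrix m m ℝ) - X * Xᵀ := by
    simp only [Matrix.sub_mul, Matrix.mul_sub, Matrix.one_mul, Matrix.mul_one, hPP]
    abel
  have h2 := Matrix.l2_opNorm_conjTranspose_mul_self ((1 : Matrix m m ℝ) - X * Xᵀ)
  rw [Matrix.conjTranspose_eq_transpose_of_trivial, hMT, hMM] at h2
  nlinarith [norm_nonneg ((1 : Matrix m m ℝ) - X * Xᵀ)]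

def genComm (α β : Type*) [DecidableEq α] [DecidableEq β] : Matrix (α × β) (β × α) ℝ :=
  fun r c => if r.1 = c.2 ∧ r.2 = c.1 then 1 else 0

lemma commMat_eq_genComm (a b : ℕ) : commMat a b = genComm (Fin a) (Fin b) := rfl

lemma genComm_apply (α β : Type*) [DecidableEq α] [DecidableEq β] (r : α × β) (c : β × α) :
    genComm α β r c = if r = (c.2, c.1) then 1 else 0 := by
  simp [genComm, Prod.ext_iff]

lemma genComm_apply' (α β : Type*) [DecidableEq α] [DecidableEq β] (r : α × β) (c : β × α) :
    genComm α β r c = if c = (r.2, r.1) then 1 else 0 := by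
  rw [genComm_apply]
  congr 1
  simp [Prod.ext_iff, eq_comm, and_comm]

lemma mul_genComm {κ : Type*} (M : Matrix κ (n × m) ℝ) (r : κ) (c : m × n) :
    (M * genComm n m) r c = M r (c.2, c.1) := by
  rw [Matrix.mul_apply]
  rw [Finset.sum_eq_single (c.2, c.1)]
  · rw [genComm_apply]; simp
  · intro b _ hb
    rw [genComm_apply, if_neg (by simpa [eq_comm] using hb ∘ Eq.symm ∘ id), mul_zero]
  · simp

lemma genComm_mul {κ : Type*} (M : Matrix (n × m) κ ℝ) (r : m × n) (c : κ) :
    (genComm m n * M) r c = M (r.2, r.1) c := by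
  rw [Matrix.mul_apply]
  rw [Finset.sum_eq_single ((r.2, r.1) : n × m)]
  · rw [genComm_apply']; simp
  · intro b _ hb
    rw [genComm_apply', if_neg (by simpa using hb), zero_mul]
  · simp

lemma transpose_genComm : (genComm m n)ᵀ = genComm n m := by
  ext r c
  rw [Matrix.transpose_apply, genComm_apply, genComm_apply']

lemma genComm_orth : (genComm m n)ᵀ * genComm m n = 1 := by
  ext r c
  rw [transpose_genComm, genComm_mul, genComm_apply, Matrix.one_apply]
  congr 1
  simp [Prod.ext_iff, and_comm]

lemma norm_genComm_le : ‖genComm m n‖ ≤ 1 :=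
  norm_le_one_of_orth _ genComm_orth

lemma euc_norm_sq {ι : Type*} [Fintype ι] (v : EuclideanSpace ℝ ι) :
    ‖v‖ ^ 2 = ∑ i, v i ^ 2 := by
  rw [EuclideanSpace.norm_eq, Real.sq_sqrt (by positivity)]
  simp [Real.norm_eq_abs, sq_abs]

lemma norm_one_kron_le (B : Matrix m n ℝ) :
    ‖((1 : Matrix q q ℝ) ⊗ₖ B)‖ ≤ ‖B‖ := by
  rw [Matrix.l2_opNorm_def]
  refine ContinuousLinearMap.opNorm_le_bound _ (norm_nonneg B) fun x => ?_
  set f := (LinearEquiv.trans Matrix.toEuclideanLin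
      LinearMap.toContinuousLinearMap) ((1 : Matrix q q ℝ) ⊗ₖ B) with hf
  have happ : ∀ (k : q) (i : m), f x (k, i) = ∑ j, B i j * x (k, j) := by
    intro k i
    have hfx : f x (k, i) = ∑ kj : q × n, ((1 : Matrix q q ℝ) ⊗ₖ B) (k, i) kj * x kj := rfl
    rw [hfx, Fintype.sum_prod_type]
    rw [Finset.sum_eq_single k]
    · simp [Matrix.kroneckerMap_apply, Matrix.one_apply]
    · intro b _ hb
      simp [Matrix.kroneckerMap_apply, Matrix.one_apply, Ne.symm hb]
    · simp
  have key : ‖f x‖ ^ 2 ≤ (‖B‖ * ‖x‖) ^ 2 := by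
    rw [euc_norm_sq]
    have : ∑ i : q × m, f x i ^ 2
        = ∑ k : q, ∑ i : m, (∑ j, B i j * x (k, j)) ^ 2 := by
      rw [Fintype.sum_prod_type]
      exact Finset.sum_congr rfl fun k _ => Finset.sum_congr rfl fun i _ => by rw [happ]
    rw [this]
    have hslice : ∀ k : q, ∑ i : m, (∑ j, B i j * x (k, j)) ^ 2
        ≤ ‖B‖ ^ 2 * ∑ j : n, x (k, j) ^ 2 := by
      intro k
      set w : EuclideanSpace ℝ n := (WithLp.equiv 2 (n → ℝ)).symm (fun j => x (k, j)) with hw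
      have h1 : ∑ i : m, (∑ j, B i j * x (k, j)) ^ 2
          = ‖(WithLp.equiv 2 (m → ℝ)).symm (B *ᵥ (fun j => x (k, j)))‖ ^ 2 := by
        rw [euc_norm_sq]
        rfl
      have h2 := Matrix.l2_opNorm_mulVec B w
      have h3 : ‖w‖ ^ 2 = ∑ j : n, x (k, j) ^ 2 := by rw [euc_norm_sq]; rfl
      have h2' : ‖(WithLp.equiv 2 (m → ℝ)).symm (B *ᵥ (fun j => x (k, j)))‖ ≤ ‖B‖ * ‖w‖ := h2
      rw [h1]
      calc ‖(WithLp.equiv 2 (m → ℝ)).symm (B *ᵥ (fun j => x (k, j)))‖ ^ 2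
          ≤ (‖B‖ * ‖w‖) ^ 2 := by
            apply pow_le_pow_left₀ (norm_nonneg _) h2'
        _ = ‖B‖ ^ 2 * ‖w‖ ^ 2 := by ring
        _ = ‖B‖ ^ 2 * ∑ j : n, x (k, j) ^ 2 := by rw [h3]
    calc ∑ k : q, ∑ i : m, (∑ j, B i j * x (k, j)) ^ 2
        ≤ ∑ k : q, ‖B‖ ^ 2 * ∑ j : n, x (k, j) ^ 2 :=
          Finset.sum_le_sum fun k _ => hslice k
      _ = ‖B‖ ^ 2 * ∑ k : q, ∑ j : n, x (k, j) ^ 2 := by rw [Finset.mul_sum]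
      _ = ‖B‖ ^ 2 * ‖x‖ ^ 2 := by rw [euc_norm_sq, Fintype.sum_prod_type]
      _ = (‖B‖ * ‖x‖) ^ 2 := by ring
  nlinarith [norm_nonneg (f x), mul_nonneg (norm_nonneg B) (norm_nonneg x)]

lemma kron_eq_conj (A : Matrix m n ℝ) :
    (A ⊗ₖ (1 : Matrix q q ℝ)) = genComm m q * (((1 : Matrix q q ℝ) ⊗ₖ A) * genComm q n) := by
  ext r c
  rw [genComm_mul, mul_genComm]
  show A r.1 c.1 * (1 : Matrix q q ℝ) r.2 c.2 = (1 : Matrix q q ℝ) r.2 c.2 * A r.1 c.1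
  ring

lemma norm_kron_one_le (A : Matrix m n ℝ) : ‖A ⊗ₖ (1 : Matrix q q ℝ)‖ ≤ ‖A‖ := by
  rw [kron_eq_conj]
  have h1 := norm_mul_le' (genComm m q) (((1 : Matrix q q ℝ) ⊗ₖ A) * genComm q n)
  have h2 := norm_mul_le' ((1 : Matrix q q ℝ) ⊗ₖ A) (genComm q n)
  have h3 := norm_one_kron_le (q := q) A
  have h4 := norm_genComm_le (m := m) (n := q)
  have h5 := norm_genComm_le (m := q) (n := n)
  nlinarith [norm_nonneg (genComm m q), norm_nonneg (genComm q n),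
    norm_nonneg (((1 : Matrix q q ℝ) ⊗ₖ A) * genComm q n),
    norm_nonneg ((1 : Matrix q q ℝ) ⊗ₖ A), norm_nonneg A]

lemma norm_kron_le (A : Matrix m n ℝ) (B : Matrix l q ℝ) : ‖A ⊗ₖ B‖ ≤ ‖A‖ * ‖B‖ := by
  have hid : A ⊗ₖ B = (A ⊗ₖ (1 : Matrix l l ℝ)) * ((1 : Matrix n n ℝ) ⊗ₖ B) := by
    rw [← Matrix.mul_kronecker_mul, Matrix.mul_one, Matrix.one_mul]
  rw [hid]
  have h1 := norm_mul_le' (A ⊗ₖ (1 : Matrix l l ℝ)) ((1 : Matrix n n ℝ) ⊗ₖ B)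
  have h2 := norm_kron_one_le (q := l) A
  have h3 := norm_one_kron_le (q := n) B
  nlinarith [norm_nonneg (A ⊗ₖ (1 : Matrix l l ℝ)), norm_nonneg ((1 : Matrix n n ℝ) ⊗ₖ B),
    norm_nonneg A, norm_nonneg B]

lemma kron_transpose (A : Matrix m n ℝ) (B : Matrix l q ℝ) : (A ⊗ₖ B)ᵀ = Aᵀ ⊗ₖ Bᵀ := rfl

lemma neg_kron (A : Matrix m n ℝ) (B : Matrix l q ℝ) : (-A) ⊗ₖ B = -(A ⊗ₖ B) := by
  ext r c; show (-A) r.1 c.1 * B r.2 c.2 = -(A r.1 c.1 * B r.2 c.2); simp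

lemma kron_neg (A : Matrix m n ℝ) (B : Matrix l q ℝ) : A ⊗ₖ (-B) = -(A ⊗ₖ B) := by
  ext r c; show A r.1 c.1 * (-B) r.2 c.2 = -(A r.1 c.1 * B r.2 c.2); simp

lemma sub_kron (A A' : Matrix m n ℝ) (B : Matrix l q ℝ) :
    (A - A') ⊗ₖ B = A ⊗ₖ B - A' ⊗ₖ B := by
  ext r c
  show (A - A') r.1 c.1 * B r.2 c.2 = A r.1 c.1 * B r.2 c.2 - A' r.1 c.1 * B r.2 c.2
  show (A r.1 c.1 - A' r.1 c.1) * B r.2 c.2 = _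
  ring

lemma kron_sub (A : Matrix m n ℝ) (B B' : Matrix l q ℝ) :
    A ⊗ₖ (B - B') = A ⊗ₖ B - A ⊗ₖ B' := by
  ext r c
  show A r.1 c.1 * (B - B') r.2 c.2 = A r.1 c.1 * B r.2 c.2 - A r.1 c.1 * B' r.2 c.2
  show A r.1 c.1 * (B r.2 c.2 - B' r.2 c.2) = _
  ring

lemma genComm_conj (A : Matrix m n ℝ) (B : Matrix n m ℝ) :
    (genComm m n)ᵀ * (A ⊗ₖ B) = (B ⊗ₖ A) * genComm m n := by
  rw [transpose_genComm]
  ext r c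
  rw [genComm_mul, mul_genComm]
  show A r.2 c.1 * B r.1 c.2 = B r.1 c.2 * A r.2 c.1
  ring

lemma norm_symPart_le (A : Matrix m m ℝ) : ‖symPart A‖ ≤ ‖A‖ := by
  rw [symPart, norm_smul]
  have hh : ‖(1 / 2 : ℝ)‖ = 1 / 2 := by rw [Real.norm_eq_abs]; norm_num
  rw [hh]
  have h1 := norm_add_le A Aᵀ
  have h2 := norm_transpose A
  linarith

lemma norm_mul_le_of {A : Matrix m n ℝ} {B : Matrix n l ℝ} {a b : ℝ}
    (ha : ‖A‖ ≤ a) (hb : ‖B‖ ≤ b) (ha0 : 0 ≤ a) : ‖A * B‖ ≤ a * b :=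
  le_trans (norm_mul_le' A B) (mul_le_mul ha hb (norm_nonneg B) ha0)

lemma norm_kron_le_of {A : Matrix m n ℝ} {B : Matrix l q ℝ} {a b : ℝ}
    (ha : ‖A‖ ≤ a) (hb : ‖B‖ ≤ b) (ha0 : 0 ≤ a) : ‖A ⊗ₖ B‖ ≤ a * b :=
  le_trans (norm_kron_le A B) (mul_le_mul ha hb (norm_nonneg B) ha0)

lemma norm_symPart_le_of {A : Matrix m m ℝ} {a : ℝ} (h : ‖A‖ ≤ a) : ‖symPart A‖ ≤ a :=
  le_trans (norm_symPart_le A) h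

lemma norm_smul_le_of {c a₀ a : ℝ} {A : Matrix m n ℝ}
    (hc : ‖c‖ = a₀) (h : ‖A‖ ≤ a) (ha0 : 0 ≤ a₀) : ‖c • A‖ ≤ a₀ * a := by
  rw [norm_smul, hc]
  exact mul_le_mul_of_nonneg_left h ha0

end StmtAux

section Identity
open StmtAux

lemma commMat_conjT {a b : ℕ} (A : Matrix (Fin a) (Fin b) ℝ) (B : Matrix (Fin b) (Fin a) ℝ) :
    (commMat a b)ᵀ * (A ⊗ₖ B) = (B ⊗ₖ A) * commMat a b := by
  rw [commMat_eq_genComm]; exact genComm_conj A B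

set_option maxHeartbeats 2000000 in
lemma key_id (n p : ℕ) (X E : Matrix (Fin n) (Fin p) ℝ) (hX : Xᵀ * X = 1)
    (hs : Xᵀ * E + (Eᵀ * X + Eᵀ * E) = 0) :
    HD n p X (X + E) -
        ((2 : ℝ) • (1 : Matrix (Fin p × Fin n) (Fin p × Fin n) ℝ)
          + (1 / 2 : ℝ) • ((Xᵀ ⊗ₖ X) * commMat n p)
          - (1 / 2 : ℝ) • ((1 : Matrix (Fin p) (Fin p) ℝ) ⊗ₖ (X * Xᵀ)))
    = (-(1/2) : ℝ) • ((Eᵀ * E) ⊗ₖ (1 : Matrix (Fin n) (Fin n) ℝ))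
    + symPart ((Eᵀ ⊗ₖ X) * commMat n p)
    + symPart ((1 : Matrix (Fin p) (Fin p) ℝ) ⊗ₖ (E * Xᵀ))
    + (3/8 : ℝ) • (((Eᵀ * E * Xᵀ) ⊗ₖ X) * commMat n p)
    + (3/8 : ℝ) • ((Xᵀ ⊗ₖ (X * (Eᵀ * E))) * commMat n p)
    + (-(3/4) : ℝ) • symPart ((1 : Matrix (Fin p) (Fin p) ℝ) ⊗ₖ (X * Xᵀ * E * Xᵀ))
    + (3/8 : ℝ) • ((Eᵀ * E) ⊗ₖ (X * Xᵀ))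
    + (2 : ℝ) • symPart (((Eᵀ * ((1 : Matrix (Fin n) (Fin n) ℝ) - X * Xᵀ)) ⊗ₖ X) * commMat n p)
    + (2 : ℝ) • symPart (((Xᵀ * E * Eᵀ * ((1 : Matrix (Fin n) (Fin n) ℝ) - X * Xᵀ)) ⊗ₖ X) * commMat n p)
    + (2 : ℝ) • symPart ((1 : Matrix (Fin p) (Fin p) ℝ) ⊗ₖ (X * Xᵀ * (E * (X + E)ᵀ + X * Eᵀ)))
    + (-1 : ℝ) • ((1 : Matrix (Fin p) (Fin p) ℝ) ⊗ₖ (E * (X + E)ᵀ + X * Eᵀ))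
    + ((Xᵀ * E * Eᵀ * X - Eᵀ * E) ⊗ₖ (1 : Matrix (Fin n) (Fin n) ℝ))
    + (-1 : ℝ) • ((Xᵀ * E * Eᵀ * X - Eᵀ * E) ⊗ₖ (X * Xᵀ))
    + (-1 : ℝ) • ((1 : Matrix (Fin p) (Fin p) ℝ) ⊗ₖ (X * Xᵀ * (E * (X + E)ᵀ + X * Eᵀ) * (X * Xᵀ))) := by
  have hr1 : Xᵀ * E = -(Eᵀ * X) - Eᵀ * E := by
    have h := eq_neg_of_add_eq_zero_left hs
    rw [h]; abel
  have hX2 : ∀ {κ : Type} (M : Matrix (Fin p) κ ℝ), Xᵀ * (X * M) = M := by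
    intro κ M; rw [← Matrix.mul_assoc, hX, Matrix.one_mul]
  have hr2 : ∀ {κ : Type} (M : Matrix (Fin p) κ ℝ),
      Xᵀ * (E * M) = -(Eᵀ * (X * M)) - Eᵀ * (E * M) := by
    intro κ M
    rw [← Matrix.mul_assoc, hr1, Matrix.sub_mul, Matrix.neg_mul, Matrix.mul_assoc,
      Matrix.mul_assoc]
  simp only [HD, symPart, Matrix.transpose_add, Matrix.transpose_sub, Matrix.transpose_mul,
    Matrix.transpose_one, Matrix.transpose_transpose, Matrix.transpose_smul, Matrix.transpose_neg,
    kron_transpose, Matrix.mul_add, Matrix.add_mul, Matrix.mul_sub, Matrix.sub_mul,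
    Matrix.neg_mul, Matrix.mul_neg, Matrix.mul_one, Matrix.one_mul, Matrix.mul_assoc,
    Matrix.add_kronecker, Matrix.kronecker_add, sub_kron, kron_sub, neg_kron, kron_neg,
    Matrix.one_kronecker_one, commMat_conjT, Matrix.mul_smul, Matrix.smul_mul,
    smul_add, smul_sub, smul_neg, hX, hX2, hr1, hr2]
  module

end Identity

set_option maxHeartbeats 2000000 in
/-- Perturbation bound for the Hessian block `D_ij`:
`‖H_D(X,Y) − (2I + (1/2)(Xᵀ⊗X)Π − (1/2)(I_p⊗XXᵀ))‖₂ ≤ 14‖Y−X‖₂ + 10‖Y−X‖₂²`. -/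
theorem stmt9 (n p : ℕ) (hp : 1 ≤ p) (hnp : p ≤ n)
    (X Y : Matrix (Fin n) (Fin p) ℝ) (hX : Xᵀ * X = 1) (hY : Yᵀ * Y = 1) :
    specNorm (HD n p X Y -
        ((2 : ℝ) • (1 : Matrix (Fin p × Fin n) (Fin p × Fin n) ℝ)
          + (1 / 2 : ℝ) • ((Xᵀ ⊗ₖ X) * commMat n p)
          - (1 / 2 : ℝ) • ((1 : Matrix (Fin p) (Fin p) ℝ) ⊗ₖ (X * Xᵀ))))
      ≤ 14 * specNorm (Y - X) + 10 * specNorm (Y - X) ^ 2 := by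
  open StmtAux in
  obtain ⟨E, rfl⟩ : ∃ E, Y = X + E := ⟨Y - X, by abel⟩
  have hs : Xᵀ * E + (Eᵀ * X + Eᵀ * E) = 0 := by
    have hexp : (X + E)ᵀ * (X + E) = 1 + (Xᵀ * E + (Eᵀ * X + Eᵀ * E)) := by
      rw [Matrix.transpose_add, Matrix.add_mul, Matrix.mul_add, Matrix.mul_add, hX]
      abel
    rw [hexp] at hY
    exact add_eq_left.mp hY
  rw [show X + E - X = E from by abel]
  rw [specNorm_eq, specNorm_eq, key_id n p X E hX hs]
  have hE0 : (0 : ℝ) ≤ ‖E‖ := norm_nonneg E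
  have hEr : ‖E‖ ≤ ‖E‖ := le_refl _
  have hEt : ‖Eᵀ‖ ≤ ‖E‖ := le_of_eq (norm_transpose E)
  have hXn : ‖X‖ ≤ 1 := norm_le_one_of_orth X hX
  have hXt : ‖Xᵀ‖ ≤ 1 := le_trans (le_of_eq (norm_transpose X)) hXn
  have hYn : ‖X + E‖ ≤ 1 := norm_le_one_of_orth _ hY
  have hYt : ‖(X + E)ᵀ‖ ≤ 1 := le_trans (le_of_eq (norm_transpose _)) hYn
  have hP : ‖X * Xᵀ‖ ≤ 1 := by
    have := norm_mul_le_of hXn hXt zero_le_one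
    linarith
  have hQ : ‖(1 : Matrix (Fin n) (Fin n) ℝ) - X * Xᵀ‖ ≤ 1 := norm_proj_le X hX
  have hPi : ‖commMat n p‖ ≤ 1 := by
    rw [commMat_eq_genComm]; exact norm_genComm_le
  have h1p : ‖(1 : Matrix (Fin p) (Fin p) ℝ)‖ ≤ 1 := norm_one_le
  have h1n : ‖(1 : Matrix (Fin n) (Fin n) ℝ)‖ ≤ 1 := norm_one_le
  have hD : ‖E * (X + E)ᵀ + X * Eᵀ‖ ≤ ‖E‖ * 1 + 1 * ‖E‖ :=
    le_trans (norm_add_le _ _)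
      (add_le_add (norm_mul_le_of hEr hYt hE0) (norm_mul_le_of hXn hEt zero_le_one))
  have hD0 : (0 : ℝ) ≤ ‖E‖ * 1 + 1 * ‖E‖ := by positivity
  have hS : ‖Xᵀ * E * Eᵀ * X - Eᵀ * E‖ ≤ ((1 * ‖E‖) * ‖E‖) * 1 + ‖E‖ * ‖E‖ :=
    le_trans (norm_sub_le _ _)
      (add_le_add
        (norm_mul_le_of (norm_mul_le_of (norm_mul_le_of hXt hEr zero_le_one) hEt
          (by positivity)) hXn (by positivity))
        (norm_mul_le_of hEt hEr hE0))
  have hS0 : (0 : ℝ) ≤ ((1 * ‖E‖) * ‖E‖) * 1 + ‖E‖ * ‖E‖ := by positivity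
  have b1 : ‖(-(1/2) : ℝ) • ((Eᵀ * E) ⊗ₖ (1 : Matrix (Fin n) (Fin n) ℝ))‖ ≤ (1/2) * ((‖E‖ * ‖E‖) * 1) := by
    refine norm_smul_le_of (by rw [Real.norm_eq_abs]; norm_num) ?_ (by norm_num)
    exact norm_kron_le_of (norm_mul_le_of hEt hEr hE0) h1n (by positivity)
  have b2 : ‖symPart ((Eᵀ ⊗ₖ X) * commMat n p)‖ ≤ (‖E‖ * 1) * 1 := by
    exact norm_symPart_le_of (norm_mul_le_of (norm_kron_le_of hEt hXn hE0) hPi (by positivity))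
  have b3 : ‖symPart ((1 : Matrix (Fin p) (Fin p) ℝ) ⊗ₖ (E * Xᵀ))‖ ≤ 1 * (‖E‖ * 1) := by
    exact norm_symPart_le_of (norm_kron_le_of h1p (norm_mul_le_of hEr hXt hE0) zero_le_one)
  have b4 : ‖(3/8 : ℝ) • (((Eᵀ * E * Xᵀ) ⊗ₖ X) * commMat n p)‖ ≤ (3/8) * ((((‖E‖ * ‖E‖) * 1) * 1) * 1) := by
    refine norm_smul_le_of (by rw [Real.norm_eq_abs]; norm_num) ?_ (by norm_num)
    exact norm_mul_le_of (norm_kron_le_of (norm_mul_le_of (norm_mul_le_of hEt hEr hE0) hXt (by positivity)) hXn (by positivity)) hPi (by positivity)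
  have b5 : ‖(3/8 : ℝ) • ((Xᵀ ⊗ₖ (X * (Eᵀ * E))) * commMat n p)‖ ≤ (3/8) * ((1 * (1 * (‖E‖ * ‖E‖))) * 1) := by
    refine norm_smul_le_of (by rw [Real.norm_eq_abs]; norm_num) ?_ (by norm_num)
    exact norm_mul_le_of (norm_kron_le_of hXt (norm_mul_le_of hXn (norm_mul_le_of hEt hEr hE0) zero_le_one) zero_le_one) hPi (by positivity)
  have b6 : ‖(-(3/4) : ℝ) • symPart ((1 : Matrix (Fin p) (Fin p) ℝ) ⊗ₖ (X * Xᵀ * E * Xᵀ))‖ ≤ (3/4) * (1 * (((1 * ‖E‖) * 1))) := by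
    refine norm_smul_le_of (by rw [Real.norm_eq_abs]; norm_num) ?_ (by norm_num)
    exact norm_symPart_le_of (norm_kron_le_of h1p (norm_mul_le_of (norm_mul_le_of hP hEr zero_le_one) hXt (by positivity)) zero_le_one)
  have b7 : ‖(3/8 : ℝ) • ((Eᵀ * E) ⊗ₖ (X * Xᵀ))‖ ≤ (3/8) * ((‖E‖ * ‖E‖) * 1) := by
    refine norm_smul_le_of (by rw [Real.norm_eq_abs]; norm_num) ?_ (by norm_num)
    exact norm_kron_le_of (norm_mul_le_of hEt hEr hE0) hP (by positivity)
  have b8 : ‖(2 : ℝ) • symPart (((Eᵀ * ((1 : Matrix (Fin n) (Fin n) ℝ) - X * Xᵀ)) ⊗ₖ X) * commMat n p)‖ ≤ 2 * (((‖E‖ * 1) * 1) * 1) := by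
    refine norm_smul_le_of (by rw [Real.norm_eq_abs]; norm_num) ?_ (by norm_num)
    exact norm_symPart_le_of (norm_mul_le_of (norm_kron_le_of (norm_mul_le_of hEt hQ hE0) hXn (by positivity)) hPi (by positivity))
  have b9 : ‖(2 : ℝ) • symPart (((Xᵀ * E * Eᵀ * ((1 : Matrix (Fin n) (Fin n) ℝ) - X * Xᵀ)) ⊗ₖ X) * commMat n p)‖ ≤ 2 * (((((1 * ‖E‖) * ‖E‖) * 1) * 1) * 1) := by
    refine norm_smul_le_of (by rw [Real.norm_eq_abs]; norm_num) ?_ (by norm_num)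
    exact norm_symPart_le_of (norm_mul_le_of (norm_kron_le_of (norm_mul_le_of (norm_mul_le_of (norm_mul_le_of hXt hEr zero_le_one) hEt (by positivity)) hQ (by positivity)) hXn (by positivity)) hPi (by positivity))
  have b10 : ‖(2 : ℝ) • symPart ((1 : Matrix (Fin p) (Fin p) ℝ) ⊗ₖ (X * Xᵀ * (E * (X + E)ᵀ + X * Eᵀ)))‖ ≤ 2 * (1 * (1 * (‖E‖ * 1 + 1 * ‖E‖))) := by
    refine norm_smul_le_of (by rw [Real.norm_eq_abs]; norm_num) ?_ (by norm_num)
    exact norm_symPart_le_of (norm_kron_le_of h1p (norm_mul_le_of hP hD zero_le_one) zero_le_one)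
  have b11 : ‖(-1 : ℝ) • ((1 : Matrix (Fin p) (Fin p) ℝ) ⊗ₖ (E * (X + E)ᵀ + X * Eᵀ))‖ ≤ 1 * (1 * (‖E‖ * 1 + 1 * ‖E‖)) := by
    refine norm_smul_le_of (by rw [Real.norm_eq_abs]; norm_num) ?_ (by norm_num)
    exact norm_kron_le_of h1p hD zero_le_one
  have b12 : ‖((Xᵀ * E * Eᵀ * X - Eᵀ * E) ⊗ₖ (1 : Matrix (Fin n) (Fin n) ℝ))‖ ≤ (((1 * ‖E‖) * ‖E‖) * 1 + ‖E‖ * ‖E‖) * 1 := by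
    exact norm_kron_le_of hS h1n hS0
  have b13 : ‖(-1 : ℝ) • ((Xᵀ * E * Eᵀ * X - Eᵀ * E) ⊗ₖ (X * Xᵀ))‖ ≤ 1 * ((((1 * ‖E‖) * ‖E‖) * 1 + ‖E‖ * ‖E‖) * 1) := by
    refine norm_smul_le_of (by rw [Real.norm_eq_abs]; norm_num) ?_ (by norm_num)
    exact norm_kron_le_of hS hP hS0
  have b14 : ‖(-1 : ℝ) • ((1 : Matrix (Fin p) (Fin p) ℝ) ⊗ₖ (X * Xᵀ * (E * (X + E)ᵀ + X * Eᵀ) * (X * Xᵀ)))‖ ≤ 1 * (1 * ((1 * (‖E‖ * 1 + 1 * ‖E‖)) * 1)) := by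
    refine norm_smul_le_of (by rw [Real.norm_eq_abs]; norm_num) ?_ (by norm_num)
    exact norm_kron_le_of h1p (norm_mul_le_of (norm_mul_le_of hP hD zero_le_one) hP (by positivity)) zero_le_one
  exact le_trans (le_trans (norm_add_le _ _) (add_le_add (le_trans (norm_add_le _ _) (add_le_add (le_trans (norm_add_le _ _) (add_le_add (le_trans (norm_add_le _ _) (add_le_add (le_trans (norm_add_le _ _) (add_le_add (le_trans (norm_add_le _ _) (add_le_add (le_trans (norm_add_le _ _) (add_le_add (le_trans (norm_add_le _ _) (add_le_add (le_trans (norm_add_le _ _) (add_le_add (le_trans (norm_add_le _ _) (add_le_add (le_trans (norm_add_le _ _) (add_le_add (le_trans (norm_add_le _ _) (add_le_add (le_trans (norm_add_le _ _) (add_le_add b1 b2)) b3)) b4)) b5)) b6)) b7)) b8)) b9)) b10)) b11)) b12)) b13)) b14)) (by nlinarith [norm_nonneg E])
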